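/- arXiv:2104.00957 — 4 statements merged into one kernel-verified Lean document; each statement's English description precedes it below -/
import Mathlib

section
/- For every complex number s with Re(s) > 3, the first moment sum κ(s;1) := ∑_{k=1}^∞ k ζ(s,k) evaluates as κ(s;1) = (1/2){ζ(s−1) + ζ(s−2)}, where ζ denotes the Riemann zeta function. -/
open Complex

/-- The Hurwitz zeta function `ζ(s, α) = ∑_{n=0}^∞ (n + α)^(-s)`. -/
noncomputable def hzeta (s : ℂ) (α : ℝ) : ℂ := ∑' n : ℕ, ((n : ℂ) + (α : ℂ)) ^ (-s)

/-!
Expanding `ζ(s, k + 1) = ∑ₙ (k + n + 1)^(-s)` turns the left-hand side into an absolutely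
convergent double series over pairs `(k, n)`. Grouping the pairs by `m = k + n` gives
`∑ₘ (1 + 2 + ⋯ + (m + 1)) (m + 1)^(-s)`, and `1 + ⋯ + (m + 1) = ((m + 1)² + (m + 1)) / 2`
splits this into `(ζ(s - 2) + ζ(s - 1)) / 2`.
-/

open Finset

theorem Summable.tsum_prod_eq_tsum_sum_antidiagonal {α : Type*} [AddCommMonoid α]
    [TopologicalSpace α] [ContinuousAdd α] [T3Space α] {F : ℕ × ℕ → α} (hF : Summable F) :
    ∑' p, F p = ∑' m, ∑ p ∈ antidiagonal m, F p := by
  let e := HasAntidiagonal.sigmaAntidiagonalEquivProd (A := ℕ)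
  calc ∑' p, F p = ∑' x, (F ∘ e) x := (e.tsum_eq F).symm
    _ = ∑' m, ∑' p : antidiagonal m, F p :=
      (e.summable_iff.mpr hF).tsum_sigma' fun _ => .of_finite
    _ = ∑' m, ∑ p ∈ antidiagonal m, F p :=
      tsum_congr fun m => by rw [tsum_fintype, sum_coe_sort]

theorem summable_prod_of_summable_sum_antidiagonal_norm {E : Type*} [NormedAddCommGroup E]
    [CompleteSpace E] {F : ℕ × ℕ → E} (h : Summable fun m => ∑ p ∈ antidiagonal m, ‖F p‖) :
    Summable F := by
  refine HasAntidiagonal.sigmaAntidiagonalEquivProd.summable_iff.mp (Summable.of_norm ?_)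
  refine (summable_sigma_of_nonneg fun _ => norm_nonneg _).mpr ⟨fun _ => .of_finite, ?_⟩
  simpa only [tsum_fintype, Function.comp_apply, HasAntidiagonal.sigmaAntidiagonalEquivProd_apply,
    sum_coe_sort (antidiagonal _) fun p => ‖F p‖] using h

theorem tsum_mul_tsum_nat_add_eq_tsum_sum_range_mul {𝕜 : Type*} [NormedField 𝕜]
    [CompleteSpace 𝕜] {a b : ℕ → 𝕜} (h : Summable fun m => (∑ k ∈ range (m + 1), ‖a k‖) * ‖b m‖) :
    ∑' k, a k * ∑' n, b (k + n) = ∑' m, (∑ k ∈ range (m + 1), a k) * b m := by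
  set F : ℕ × ℕ → 𝕜 := fun p => a p.1 * b (p.1 + p.2)
  have hF_antidiagonal : ∀ m, ∑ p ∈ antidiagonal m, F p = (∑ k ∈ range (m + 1), a k) * b m := by
    intro m
    rw [Nat.sum_antidiagonal_eq_sum_range_succ_mk, sum_mul]
    exact sum_congr rfl fun k hk => by
      simp only [F, Nat.add_sub_cancel' (mem_range_succ_iff.mp hk)]
  have hF : Summable F := by
    refine summable_prod_of_summable_sum_antidiagonal_norm (h.congr fun m => ?_)
    rw [Nat.sum_antidiagonal_eq_sum_range_succ_mk, sum_mul]
    exact sum_congr rfl fun k hk => by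
      simp only [F, norm_mul, Nat.add_sub_cancel' (mem_range_succ_iff.mp hk)]
  calc ∑' k, a k * ∑' n, b (k + n) = ∑' k, ∑' n, F (k, n) := by simp_rw [F, tsum_mul_left]
    _ = ∑' m, (∑ k ∈ range (m + 1), a k) * b m := by
      rw [← hF.tsum_prod, hF.tsum_prod_eq_tsum_sum_antidiagonal]
      exact tsum_congr hF_antidiagonal

theorem two_mul_sum_range_natCast_add_one {R : Type*} [CommSemiring R] (m : ℕ) :
    2 * ∑ k ∈ range (m + 1), ((k : R) + 1) = ((m : R) + 1) * ((m : R) + 2) := by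
  induction m with
  | zero => norm_num
  | succ m ih =>
    rw [sum_range_succ, mul_add, ih]
    push_cast
    ring

theorem hzeta_natCast_add_one (s : ℂ) (k : ℕ) :
    hzeta s ((k : ℝ) + 1) = ∑' n : ℕ, (((k + n : ℕ) : ℂ) + 1) ^ (-s) := by
  refine tsum_congr fun n => ?_
  push_cast
  ring_nf

theorem summable_norm_natCast_add_one_cpow_neg {s : ℂ} (hs : 1 < s.re) :
    Summable fun n : ℕ => ‖((n : ℂ) + 1) ^ (-s)‖ := by
  have hp := (summable_nat_add_iff (f := fun n : ℕ => (n : ℝ) ^ (-s.re)) 1).mpr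
    (Real.summable_nat_rpow.mpr (by linarith))
  refine hp.congr fun n => ?_
  rw [← Nat.cast_succ, norm_natCast_cpow_of_pos n.succ_pos, neg_re]

theorem riemannZeta_eq_tsum_natCast_add_one_cpow_neg {s : ℂ} (hs : 1 < s.re) :
    riemannZeta s = ∑' n : ℕ, ((n : ℂ) + 1) ^ (-s) := by
  rw [zeta_eq_tsum_one_div_nat_add_one_cpow hs]
  exact tsum_congr fun n => by rw [cpow_neg, one_div]

theorem sum_range_natCast_add_one_mul_cpow_neg (s : ℂ) (m : ℕ) :
    (∑ k ∈ range (m + 1), ((k : ℂ) + 1)) * ((m : ℂ) + 1) ^ (-s)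
      = (1 / 2) * (((m : ℂ) + 1) ^ (-(s - 1)) + ((m : ℂ) + 1) ^ (-(s - 2))) := by
  have hm : (m : ℂ) + 1 ≠ 0 := by exact_mod_cast m.succ_ne_zero
  have h1 : ((m : ℂ) + 1) ^ (-(s - 1)) = ((m : ℂ) + 1) * ((m : ℂ) + 1) ^ (-s) := by
    rw [show -(s - 1) = 1 + -s by ring, cpow_add _ _ hm, cpow_one]
  have h2 : ((m : ℂ) + 1) ^ (-(s - 2)) = ((m : ℂ) + 1) ^ 2 * ((m : ℂ) + 1) ^ (-s) := by
    rw [show -(s - 2) = (2 : ℕ) + -s by push_cast; ring, cpow_add _ _ hm, cpow_natCast]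
  rw [h1, h2]
  linear_combination (1 / 2 * ((m : ℂ) + 1) ^ (-s)) * two_mul_sum_range_natCast_add_one (R := ℂ) m

theorem summable_sum_range_norm_natCast_add_one_mul_norm_cpow_neg {s : ℂ} (hs : 3 < s.re) :
    Summable fun m : ℕ => (∑ k ∈ range (m + 1), ‖(k : ℂ) + 1‖) * ‖((m : ℂ) + 1) ^ (-s)‖ := by
  have h₁ := summable_norm_natCast_add_one_cpow_neg (s := s - 1) (by rw [sub_re, one_re]; linarith)
  have h₂ := summable_norm_natCast_add_one_cpow_neg (s := s - 2) (by rw [sub_re, re_ofNat]; linarith)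
  refine .of_nonneg_of_le (fun _ => by positivity) (fun m => ?_) ((h₁.add h₂).mul_left (1 / 2))
  have hnorm_sum : ∑ k ∈ range (m + 1), ‖(k : ℂ) + 1‖ = ‖∑ k ∈ range (m + 1), ((k : ℂ) + 1)‖ := by
    simp_rw [← Nat.cast_succ, ← Nat.cast_sum, norm_natCast, Nat.cast_sum]
  rw [hnorm_sum, ← norm_mul, sum_range_natCast_add_one_mul_cpow_neg, norm_mul, norm_div, norm_one,
    RCLike.norm_ofNat]
  gcongr
  exact norm_add_le _ _

theorem first_moment_sum_hurwitzZeta (s : ℂ) (hs : 3 < s.re) :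
    ∑' k : ℕ, ((k : ℂ) + 1) * hzeta s ((k : ℝ) + 1)
      = (1 / 2) * (riemannZeta (s - 1) + riemannZeta (s - 2)) := by
  have hs₁ : 1 < (s - 1).re := by rw [sub_re, one_re]; linarith
  have hs₂ : 1 < (s - 2).re := by rw [sub_re, re_ofNat]; linarith
  calc ∑' k : ℕ, ((k : ℂ) + 1) * hzeta s ((k : ℝ) + 1)
      = ∑' k : ℕ, ((k : ℂ) + 1) * ∑' n : ℕ, (((k + n : ℕ) : ℂ) + 1) ^ (-s) := by
        simp_rw [hzeta_natCast_add_one]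
    _ = ∑' m : ℕ, (∑ k ∈ range (m + 1), ((k : ℂ) + 1)) * ((m : ℂ) + 1) ^ (-s) :=
        tsum_mul_tsum_nat_add_eq_tsum_sum_range_mul
          (summable_sum_range_norm_natCast_add_one_mul_norm_cpow_neg hs)
    _ = (1 / 2) * (riemannZeta (s - 1) + riemannZeta (s - 2)) := by
        simp_rw [sum_range_natCast_add_one_mul_cpow_neg, tsum_mul_left,
          (summable_norm_natCast_add_one_cpow_neg hs₁).of_norm.tsum_add
            (summable_norm_natCast_add_one_cpow_neg hs₂).of_norm,
          riemannZeta_eq_tsum_natCast_add_one_cpow_neg hs₁,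
          riemannZeta_eq_tsum_natCast_add_one_cpow_neg hs₂]
end

section
/- For every complex number s with Re(s) > 3, one has ∑_{k=1}^∞ k ζ(s, 2k) = (1/8){ (1 + 2^{1−s}) ζ(s−1) + ζ(s−2) − 2^{1−s} ( ζ(s−1, 1/2) + (1/2) ζ(s, 1/2) ) }, where ζ(·) is the Riemann zeta function and ζ(·,·) is the Hurwitz zeta function. -/
open Complex

/-!
Splitting `n` by parity gives `ζ(s, 2c) = 2^(-s) (ζ(s, c) + ζ(s, c + 1/2))`, which reduces the
sum to the first moments `∑ₖ (k + 1) ζ(s, k + c)` for `c = 1` and `c = 3/2`. Regrouping such a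
double series along `m = k + j` turns it into `∑ₘ (m + 1)(m + 2)/2 · (m + c)^(-s)`, and
expanding `(m + 1)(m + 2)` in powers of `m + c` expresses it through `ζ(s - 2, c)`,
`ζ(s - 1, c)` and `ζ(s, c)`. The values at `c = 1, 3/2` are then read off from
`ζ(s, 1) = ζ(s)`, `ζ(s, 1/2) = (2^s - 1) ζ(s)` and `ζ(s, 1/2) = 2^s + ζ(s, 3/2)`.
-/

open Finset

lemma cpow_neg_sub_natCast {x : ℂ} (hx : x ≠ 0) (w : ℂ) (k : ℕ) :
    x ^ (-(w - k)) = x ^ k * x ^ (-w) := by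
  rw [show -(w - k) = k + -w by ring, cpow_add _ _ hx, cpow_natCast]

lemma half_cpow_neg (w : ℂ) : ((1 / 2 : ℝ) : ℂ) ^ (-w) = 2 ^ w := by
  rw [one_div, ofReal_inv, inv_cpow _ _ (by simp [Real.pi_ne_zero.symm]), cpow_neg, inv_inv]
  norm_num

lemma summable_natCast_add_cpow_neg {c : ℝ} (hc : 0 < c) {w : ℂ} (hw : 1 < w.re) :
    Summable fun n : ℕ => ((n : ℂ) + c) ^ (-w) := by
  refine .of_norm (((Real.summable_one_div_nat_add_rpow c w.re).2 hw).congr fun n => ?_)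
  have hn : 0 < (n : ℝ) + c := by positivity
  rw [show (n : ℂ) + c = ((n + c : ℝ) : ℂ) by push_cast; rfl, norm_cpow_eq_rpow_re_of_pos hn,
    neg_re, Real.rpow_neg hn.le, abs_of_pos hn, one_div]

lemma sum_range_natCast_add_one {K : Type*} [Field K] [CharZero K] (n : ℕ) :
    ∑ k ∈ range n, ((k : K) + 1) = n * (n + 1) / 2 := by
  induction n with
  | zero => simp
  | succ n ih => rw [sum_range_succ, ih]; push_cast; ring

lemma sum_antidiagonal_natCast_add_one {K : Type*} [Field K] [CharZero K] (m : ℕ) :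
    ∑ x ∈ antidiagonal m, ((x.1 : K) + 1) = (m + 1) * (m + 2) / 2 := by
  rw [Nat.sum_antidiagonal_eq_sum_range_succ_mk, sum_range_natCast_add_one]
  push_cast; ring

theorem hasSum_natCast_add_one_mul_tsum_add {f : ℕ → ℂ}
    (hf : Summable fun m : ℕ => ((m : ℝ) + 1) ^ 2 * ‖f m‖) :
    HasSum (fun k : ℕ => ((k : ℂ) + 1) * ∑' j, f (k + j))
      (∑' m : ℕ, ((m : ℂ) + 1) * (m + 2) / 2 * f m) := by
  let e := HasAntidiagonal.sigmaAntidiagonalEquivProd (A := ℕ)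
  let g : ℕ × ℕ → ℂ := fun p => ((p.1 : ℂ) + 1) * f (p.1 + p.2)
  have hge : ∀ (m : ℕ) (x : antidiagonal m), g (e ⟨m, x⟩) = ((x.1.1 : ℂ) + 1) * f m := by
    rintro m ⟨x, hx⟩
    simp only [g, e, HasAntidiagonal.sigmaAntidiagonalEquivProd_apply, mem_antidiagonal.mp hx]
  have hfiber : ∀ m : ℕ, HasSum (fun x : antidiagonal m => g (e ⟨m, x⟩))
      (((m : ℂ) + 1) * (m + 2) / 2 * f m) := by
    intro m
    simp_rw [hge, ← sum_antidiagonal_natCast_add_one, sum_mul]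
    exact (antidiagonal m).hasSum fun x => ((x.1 : ℂ) + 1) * f m
  have hge_summable : Summable (g ∘ e) := by
    refine .of_norm ((summable_sigma_of_nonneg fun _ => norm_nonneg _).mpr
      ⟨fun m => .of_finite, hf.of_nonneg_of_le (fun _ => tsum_nonneg fun _ => norm_nonneg _)
        fun m => ?_⟩)
    have hnorm : ∀ x : antidiagonal m,
        ‖(g ∘ e) ⟨m, x⟩‖ = ((x.1.1 : ℝ) + 1) * ‖f m‖ := by
      intro x
      rw [Function.comp_apply, hge, norm_mul]
      norm_cast
    rw [tsum_fintype, Fintype.sum_congr _ _ hnorm, ← sum_mul,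
      sum_coe_sort (antidiagonal m) fun x => (x.1 : ℝ) + 1, sum_antidiagonal_natCast_add_one]
    gcongr
    nlinarith [m.cast_nonneg (α := ℝ)]
  have hg : Summable g := e.summable_iff.mp hge_summable
  have hrows : HasSum (fun k : ℕ => ((k : ℂ) + 1) * ∑' j, f (k + j)) (∑' p, g p) :=
    hg.hasSum.prod_fiberwise fun k => by
      simpa only [g, tsum_mul_left] using (hg.prod_factor k).hasSum
  rw [← e.tsum_eq] at hrows
  exact (hge_summable.hasSum.sigma hfiber).tsum_eq ▸ hrows

lemma hasSum_hzeta {c : ℝ} (hc : 0 < c) {w : ℂ} (hw : 1 < w.re) :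
    HasSum (fun n : ℕ => ((n : ℂ) + c) ^ (-w)) (hzeta w c) :=
  (summable_natCast_add_cpow_neg hc hw).hasSum

lemma hzeta_one {w : ℂ} (hw : 1 < w.re) : hzeta w 1 = riemannZeta w := by
  rw [zeta_eq_tsum_one_div_nat_add_one_cpow hw]
  unfold hzeta
  exact tsum_congr fun n => by rw [ofReal_one, cpow_neg, one_div]

lemma hzeta_eq_cpow_add {c : ℝ} (hc : 0 < c) {w : ℂ} (hw : 1 < w.re) :
    hzeta w c = (c : ℂ) ^ (-w) + hzeta w (c + 1) := by
  unfold hzeta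
  rw [(summable_natCast_add_cpow_neg hc hw).tsum_eq_zero_add]
  congr 1
  · rw [Nat.cast_zero, zero_add]
  · exact tsum_congr fun n => by push_cast; ring_nf

lemma hzeta_two_mul {c : ℝ} (hc : 0 < c) {w : ℂ} (hw : 1 < w.re) :
    hzeta w (2 * c) = 2 ^ (-w) * (hzeta w c + hzeta w (c + 1 / 2)) := by
  have hscale : ∀ x : ℝ, 0 ≤ x →
      ((2 * x : ℝ) : ℂ) ^ (-w) = 2 ^ (-w) * (x : ℂ) ^ (-w) := by
    intro x hx
    rw [ofReal_mul, mul_cpow_ofReal_nonneg zero_le_two hx, ofReal_ofNat]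
  have heven : HasSum (fun n : ℕ => (((2 * n : ℕ) : ℂ) + ((2 * c : ℝ) : ℂ)) ^ (-w))
      (2 ^ (-w) * hzeta w c) := by
    refine ((hasSum_hzeta hc hw).mul_left _).congr_fun fun n => ?_
    rw [show ((2 * n : ℕ) : ℂ) + ((2 * c : ℝ) : ℂ) = ((2 * (n + c) : ℝ) : ℂ) by
      push_cast; ring, hscale _ (by positivity)]
    push_cast; rfl
  have hodd : HasSum (fun n : ℕ => (((2 * n + 1 : ℕ) : ℂ) + ((2 * c : ℝ) : ℂ)) ^ (-w))
      (2 ^ (-w) * hzeta w (c + 1 / 2)) := by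
    refine ((hasSum_hzeta (by positivity) hw).mul_left _).congr_fun fun n => ?_
    rw [show ((2 * n + 1 : ℕ) : ℂ) + ((2 * c : ℝ) : ℂ) = ((2 * (n + c + 1 / 2)) : ℝ) by
      push_cast; ring, hscale _ (by positivity)]
    push_cast; rw [add_assoc]
  rw [mul_add]
  exact (HasSum.even_add_odd (f := fun n : ℕ => ((n : ℂ) + ((2 * c : ℝ) : ℂ)) ^ (-w))
    heven hodd).tsum_eq

lemma hzeta_half {w : ℂ} (hw : 1 < w.re) : hzeta w (1 / 2) = (2 ^ w - 1) * riemannZeta w := by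
  have h := hzeta_two_mul one_half_pos hw
  rw [show (2 : ℝ) * (1 / 2) = 1 by norm_num, show (1 / 2 : ℝ) + 1 / 2 = 1 by norm_num,
    hzeta_one hw] at h
  have h2 : (2 : ℂ) ^ w * 2 ^ (-w) = 1 := by rw [← cpow_add _ _ two_ne_zero]; simp
  linear_combination -2 ^ w * h - (hzeta w (1 / 2) + riemannZeta w) * h2

lemma hzeta_three_halves {w : ℂ} (hw : 1 < w.re) : hzeta w (3 / 2) = hzeta w (1 / 2) - 2 ^ w := by
  rw [hzeta_eq_cpow_add one_half_pos hw, half_cpow_neg]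
  norm_num

lemma natCast_add_cpow_neg_sub_two {c : ℝ} (hc : 0 < c) (s : ℂ) (m : ℕ) :
    ((m : ℂ) + c) ^ (-(s - 2)) = ((m : ℂ) + c) ^ 2 * ((m : ℂ) + c) ^ (-s) := by
  have hne : (m : ℂ) + c ≠ 0 := by exact_mod_cast (by positivity : (m : ℝ) + c ≠ 0)
  exact_mod_cast cpow_neg_sub_natCast hne s 2

lemma natCast_add_cpow_neg_sub_one {c : ℝ} (hc : 0 < c) (s : ℂ) (m : ℕ) :
    ((m : ℂ) + c) ^ (-(s - 1)) = ((m : ℂ) + c) * ((m : ℂ) + c) ^ (-s) := by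
  have hne : (m : ℂ) + c ≠ 0 := by exact_mod_cast (by positivity : (m : ℝ) + c ≠ 0)
  simpa using cpow_neg_sub_natCast hne s 1

lemma summable_natCast_add_one_sq_mul_norm_cpow_neg {c : ℝ} (hc : 0 < c) {s : ℂ}
    (hs : 1 < (s - 2).re) :
    Summable fun m : ℕ => ((m : ℝ) + 1) ^ 2 * ‖((m : ℂ) + c) ^ (-s)‖ := by
  refine ((summable_natCast_add_cpow_neg hc hs).norm.mul_left ((1 + 1 / c) ^ 2))
    |>.of_nonneg_of_le (fun _ => by positivity) fun m => ?_
  rw [natCast_add_cpow_neg_sub_two hc, norm_mul, norm_pow, ← mul_assoc, ← mul_pow,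
    show (m : ℂ) + c = ((m + c : ℝ) : ℂ) by push_cast; rfl, norm_real,
    Real.norm_of_nonneg (by positivity)]
  gcongr
  rw [add_mul, one_mul, div_mul_eq_mul_div, one_mul, add_div, div_self hc.ne']
  have hmc : 0 ≤ (m : ℝ) / c := by positivity
  linarith

lemma hasSum_moment_natCast_add_cpow_neg {c : ℝ} (hc : 0 < c) {s : ℂ} (hs : 3 < s.re) :
    HasSum (fun m : ℕ => ((m : ℂ) + 1) * (m + 2) / 2 * ((m : ℂ) + c) ^ (-s))
      ((hzeta (s - 2) c + (3 - 2 * c) * hzeta (s - 1) c + (1 - c) * (2 - c) * hzeta s c) / 2) := by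
  have h2 : 1 < (s - 2).re := by simp only [sub_re, re_ofNat]; linarith
  have h1 : 1 < (s - 1).re := by simp only [sub_re, one_re]; linarith
  have h0 : 1 < s.re := by linarith
  have hsum := (((hasSum_hzeta hc h2).add ((hasSum_hzeta hc h1).mul_left (3 - 2 * (c : ℂ)))).add
    ((hasSum_hzeta hc h0).mul_left ((1 - (c : ℂ)) * (2 - c)))).div_const 2
  -- `(m + 1)(m + 2) = (m + c)² + (3 - 2c)(m + c) + (1 - c)(2 - c)`
  refine hsum.congr_fun fun m => ?_
  rw [natCast_add_cpow_neg_sub_two hc, natCast_add_cpow_neg_sub_one hc]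
  ring

theorem hasSum_natCast_add_one_mul_hzeta {c : ℝ} (hc : 0 < c) {s : ℂ} (hs : 3 < s.re) :
    HasSum (fun k : ℕ => ((k : ℂ) + 1) * hzeta s (k + c))
      ((hzeta (s - 2) c + (3 - 2 * c) * hzeta (s - 1) c + (1 - c) * (2 - c) * hzeta s c) / 2) := by
  have htail : ∀ k : ℕ, hzeta s (k + c) = ∑' j, ((((k + j : ℕ) : ℂ) + c) ^ (-s)) := by
    intro k
    unfold hzeta
    exact tsum_congr fun j => by push_cast; ring_nf
  rw [← (hasSum_moment_natCast_add_cpow_neg hc hs).tsum_eq]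
  simp_rw [htail]
  exact hasSum_natCast_add_one_mul_tsum_add (f := fun m : ℕ => ((m : ℂ) + c) ^ (-s))
    (summable_natCast_add_one_sq_mul_norm_cpow_neg hc (by simp only [sub_re, re_ofNat]; linarith))

theorem first_moment_sum_hurwitzZeta_even (s : ℂ) (hs : 3 < s.re) :
    ∑' k : ℕ, ((k : ℂ) + 1) * hzeta s (2 * ((k : ℝ) + 1))
      = (1 / 8) * ((1 + 2 ^ (1 - s)) * riemannZeta (s - 1) + riemannZeta (s - 2)
          - 2 ^ (1 - s) * (hzeta (s - 1) (1 / 2) + (1 / 2) * hzeta s (1 / 2))) := by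
  have h0 : 1 < s.re := by linarith
  have h1 : 1 < (s - 1).re := by simp only [sub_re, one_re]; linarith
  have h2 : 1 < (s - 2).re := by simp only [sub_re, re_ofNat]; linarith
  have hsplit : ∀ k : ℕ, ((k : ℂ) + 1) * hzeta s (2 * ((k : ℝ) + 1)) =
      2 ^ (-s) * (((k : ℂ) + 1) * hzeta s (k + 1) + ((k : ℂ) + 1) * hzeta s (k + 3 / 2)) := by
    intro k
    rw [hzeta_two_mul (by positivity) h0, show (k : ℝ) + 1 + 1 / 2 = k + 3 / 2 by ring]
    ring
  rw [tsum_congr hsplit, (((hasSum_natCast_add_one_mul_hzeta one_pos hs).add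
    (hasSum_natCast_add_one_mul_hzeta (by norm_num : (0 : ℝ) < 3 / 2) hs)).mul_left _).tsum_eq,
    hzeta_three_halves h0, hzeta_three_halves h2, hzeta_half h2, hzeta_half h1,
    hzeta_one h0, hzeta_one h1, hzeta_one h2]
  simp only [cpow_sub _ _ two_ne_zero, cpow_neg, cpow_one, cpow_ofNat]
  push_cast
  field_simp
  ring
end

section
/- For every complex number s with Re(s) > 4, one has ∑_{k=1}^∞ k² ζ(s, 2k) = (1/24){ (3·2^{1−s} − 1) ζ(s−1) + 6·2^{1−s} ζ(s−2) + ζ(s−3) }, where ζ denotes the Riemann zeta function. -/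
open Complex

/-!
Since `ζ(s, 2k) = ∑_{m ≥ 2k} m⁻ˢ`, the left-hand side is the double series `∑_{1 ≤ k, 2k ≤ m} k² m⁻ˢ`.
Summing over `k` first, the coefficient of `m⁻ˢ` is `∑_{k ≤ m/2} k² = (m³ - m)/24 + [m even] (m² + m)/8`,
and summing over even `m` only rescales a zeta value by a power of `2`.
The interchange is justified by `k² m^(-σ) ≤ (k m)^(1 - σ/2)` for `k ≤ m`, which is the general term
of the product of two convergent `p`-series when `σ > 4`.
-/

open Finset

lemma hasSum_natCast_cpow_neg {t : ℂ} (ht : 1 < t.re) :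
    HasSum (fun n : ℕ => (n : ℂ) ^ (-t)) (riemannZeta t) := by
  have h := (Complex.summable_one_div_nat_cpow.mpr ht).hasSum
  rw [← zeta_eq_tsum_one_div_nat_cpow ht] at h
  simpa only [one_div, ← cpow_neg] using h

lemma hasSum_natCast_two_mul_cpow_neg {t : ℂ} (ht : 1 < t.re) :
    HasSum (fun n : ℕ => ((2 * n : ℕ) : ℂ) ^ (-t)) (2 ^ (-t) * riemannZeta t) := by
  have h_eq : (fun n : ℕ => ((2 * n : ℕ) : ℂ) ^ (-t)) = fun n : ℕ => 2 ^ (-t) * (n : ℂ) ^ (-t) :=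
    funext fun n => by rw [Nat.cast_mul, natCast_mul_natCast_cpow, Nat.cast_two]
  exact h_eq ▸ (hasSum_natCast_cpow_neg ht).mul_left _

lemma hasSum_ite_le_natCast_cpow_neg {s : ℂ} (hs : 1 < s.re) (N : ℕ) :
    HasSum (fun m : ℕ => if N ≤ m then (m : ℂ) ^ (-s) else 0) (hzeta s N) := by
  have hshift : HasSum (fun n : ℕ => ((n + N : ℕ) : ℂ) ^ (-s)) (hzeta s N) := by
    have h := ((summable_nat_add_iff N).mpr (hasSum_natCast_cpow_neg hs).summable).hasSum
    simpa only [hzeta, Nat.cast_add, Complex.ofReal_natCast] using h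
  have h := (hasSum_nat_add_iff (f := fun m : ℕ => if N ≤ m then (m : ℂ) ^ (-s) else 0) N).mp
    (by simpa using hshift)
  rwa [sum_eq_zero fun m hm => if_neg (by simpa using hm), add_zero] at h

lemma natCast_cpow_neg_sub_natCast (m : ℕ) {j : ℕ} (hj : j ≠ 0) {s : ℂ} (hs : s ≠ j) :
    (m : ℂ) ^ (-(s - j)) = (m : ℂ) ^ j * (m : ℂ) ^ (-s) := by
  rcases eq_or_ne m 0 with rfl | hm
  · rw [Nat.cast_zero, zero_cpow (by rwa [neg_ne_zero, sub_ne_zero]), zero_pow hj, zero_mul]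
  · rw [show -(s - j) = (j : ℂ) + -s by ring, cpow_add _ _ (Nat.cast_ne_zero.mpr hm), cpow_natCast]

lemma sum_range_add_one_sq_mul_six (n : ℕ) :
    (∑ k ∈ range n, (k + 1) ^ 2) * 6 = n * (n + 1) * (2 * n + 1) := by
  induction n with
  | zero => rfl
  | succ n ih => rw [sum_range_succ, add_mul, ih]; ring

lemma sum_range_half_add_one_sq {R : Type*} [CommRing R] (m : ℕ) :
    24 * ∑ k ∈ range (m / 2), ((k : R) + 1) ^ 2
      = (m : R) ^ 3 - m + if Even m then 3 * ((m : R) ^ 2 + m) else 0 := by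
  obtain ⟨j, rfl | rfl⟩ := Nat.even_or_odd' m
  · have h := congrArg (Nat.cast (R := R)) (sum_range_add_one_sq_mul_six j)
    push_cast at h
    rw [Nat.mul_div_cancel_left j two_pos, if_pos (even_two_mul j)]
    push_cast
    linear_combination 4 * h
  · have h := congrArg (Nat.cast (R := R)) (sum_range_add_one_sq_mul_six j)
    push_cast at h
    rw [show (2 * j + 1) / 2 = j by omega, if_neg (Nat.not_even_two_mul_add_one j)]
    push_cast
    linear_combination 4 * h

lemma sq_mul_rpow_neg_le_mul_rpow {x y σ : ℝ} (hx : 0 < x) (hxy : x ≤ y) (hσ : -2 ≤ σ) :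
    x ^ 2 * y ^ (-σ) ≤ (x * y) ^ (1 - σ / 2) := by
  have hy : 0 < y := hx.trans_le hxy
  calc x ^ 2 * y ^ (-σ) = x ^ (1 - σ / 2) * x ^ (1 + σ / 2) * y ^ (-σ) := by
        rw [← Real.rpow_add hx, ← Real.rpow_two]; ring_nf
    _ ≤ x ^ (1 - σ / 2) * y ^ (1 + σ / 2) * y ^ (-σ) := by
        gcongr; linarith
    _ = (x * y) ^ (1 - σ / 2) := by
        rw [Real.mul_rpow hx.le hy.le, mul_assoc, ← Real.rpow_add hy]; ring_nf

/-- The summand `k² m⁻ˢ` (`1 ≤ k`, `2k ≤ m`) of `∑ k² ζ(s, 2k)`, with `k` shifted to start at `0`. -/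
noncomputable def evenTailTerm (s : ℂ) (k m : ℕ) : ℂ :=
  if 2 * (k + 1) ≤ m then ((k : ℂ) + 1) ^ 2 * (m : ℂ) ^ (-s) else 0

lemma hasSum_evenTailTerm {s : ℂ} (hs : 1 < s.re) (k : ℕ) :
    HasSum (evenTailTerm s k) (((k : ℂ) + 1) ^ 2 * hzeta s (2 * ((k : ℝ) + 1))) := by
  have h := (hasSum_ite_le_natCast_cpow_neg hs (2 * (k + 1))).mul_left (((k : ℂ) + 1) ^ 2)
  simp only [mul_ite, mul_zero] at h
  unfold evenTailTerm
  exact_mod_cast h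

lemma tsum_evenTailTerm_left (s : ℂ) (m : ℕ) :
    ∑' k, evenTailTerm s k m = (∑ k ∈ range (m / 2), ((k : ℂ) + 1) ^ 2) * (m : ℂ) ^ (-s) := by
  rw [tsum_eq_sum (s := range (m / 2)) fun k hk => by simp [evenTailTerm] at hk ⊢; omega, sum_mul]
  exact sum_congr rfl fun k hk => if_pos (by simp at hk; omega)

lemma summable_uncurry_evenTailTerm {s : ℂ} (hs : 4 < s.re) :
    Summable (Function.uncurry (evenTailTerm s)) := by
  have h_nat : Summable fun n : ℕ => (n : ℝ) ^ (1 - s.re / 2) :=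
    Real.summable_nat_rpow.mpr (by linarith)
  have h_succ : Summable fun n : ℕ => ((n : ℝ) + 1) ^ (1 - s.re / 2) := by
    exact_mod_cast (summable_nat_add_iff 1).mpr h_nat
  refine Summable.of_norm_bounded ((h_succ.mul_of_nonneg h_nat (fun _ => by positivity)
    fun _ => by positivity)) fun ⟨k, m⟩ => ?_
  simp only [Function.uncurry_apply_pair, evenTailTerm]
  split_ifs with hkm
  · have h_norm : ‖(k : ℂ) + 1‖ = (k : ℝ) + 1 := by exact_mod_cast Complex.norm_natCast (k + 1)
    rw [norm_mul, norm_pow, h_norm, norm_natCast_cpow_of_pos (by omega), neg_re,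
      ← Real.mul_rpow (by positivity) (by positivity)]
    exact sq_mul_rpow_neg_le_mul_rpow (by positivity) (by exact_mod_cast (by omega : k + 1 ≤ m))
      (by linarith)
  · rw [norm_zero]; positivity

lemma sum_range_half_add_one_sq_mul_cpow (m : ℕ) {s : ℂ} (hs1 : s ≠ 1) (hs2 : s ≠ 2)
    (hs3 : s ≠ 3) :
    (∑ k ∈ range (m / 2), ((k : ℂ) + 1) ^ 2) * (m : ℂ) ^ (-s)
      = (1 / 24) * ((m : ℂ) ^ (-(s - 3)) - (m : ℂ) ^ (-(s - 1)))
        + if Even m then (1 / 8) * ((m : ℂ) ^ (-(s - 2)) + (m : ℂ) ^ (-(s - 1))) else 0 := by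
  have h1 := natCast_cpow_neg_sub_natCast m one_ne_zero (s := s) (by exact_mod_cast hs1)
  have h2 := natCast_cpow_neg_sub_natCast m two_ne_zero (s := s) (by exact_mod_cast hs2)
  have h3 := natCast_cpow_neg_sub_natCast m three_ne_zero (s := s) (by exact_mod_cast hs3)
  push_cast at h1 h2 h3
  have h_sum := sum_range_half_add_one_sq (R := ℂ) m
  rw [h1, h2, h3]
  split_ifs at h_sum ⊢ <;> linear_combination (m : ℂ) ^ (-s) / 24 * h_sum

lemma hasSum_sum_range_half_add_one_sq_mul_cpow {s : ℂ} (hs : 4 < s.re) :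
    HasSum (fun m : ℕ => (∑ k ∈ range (m / 2), ((k : ℂ) + 1) ^ 2) * (m : ℂ) ^ (-s))
      ((1 / 24) * ((3 * 2 ^ (1 - s) - 1) * riemannZeta (s - 1)
          + 6 * 2 ^ (1 - s) * riemannZeta (s - 2) + riemannZeta (s - 3))) := by
  have hs1 : 1 < (s - 1).re := by norm_num; linarith
  have hs2 : 1 < (s - 2).re := by norm_num; linarith
  have hs3 : 1 < (s - 3).re := by norm_num; linarith
  have h_all := ((hasSum_natCast_cpow_neg hs3).sub (hasSum_natCast_cpow_neg hs1)).mul_left (1 / 24)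
  have h_even : HasSum
      (fun m : ℕ => if Even m then (1 / 8) * ((m : ℂ) ^ (-(s - 2)) + (m : ℂ) ^ (-(s - 1))) else 0)
      ((1 / 8) * (2 ^ (-(s - 2)) * riemannZeta (s - 2) + 2 ^ (-(s - 1)) * riemannZeta (s - 1))
        + 0) := by
    refine HasSum.even_add_odd ?_ ?_
    · simp only [even_two_mul, if_true]
      exact ((hasSum_natCast_two_mul_cpow_neg hs2).add
        (hasSum_natCast_two_mul_cpow_neg hs1)).mul_left (1 / 8)
    · simp only [Nat.not_even_two_mul_add_one, if_false]
      exact hasSum_zero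
  have h_pow : (2 : ℂ) ^ (-(s - 2)) = 2 * 2 ^ (1 - s) := by
    rw [show -(s - 2) = 1 + (1 - s) by ring, cpow_add _ _ two_ne_zero, cpow_one]
  have h_ne (j : ℂ) (hj : 1 < (s - j).re) : s ≠ j := fun h => by norm_num [h] at hj
  have h_sum : (1 / 24) * ((3 * 2 ^ (1 - s) - 1) * riemannZeta (s - 1)
      + 6 * 2 ^ (1 - s) * riemannZeta (s - 2) + riemannZeta (s - 3))
      = 1 / 24 * (riemannZeta (s - 3) - riemannZeta (s - 1)) + ((1 / 8) * (2 ^ (-(s - 2))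
        * riemannZeta (s - 2) + 2 ^ (-(s - 1)) * riemannZeta (s - 1)) + 0) := by
    rw [h_pow, neg_sub]
    ring
  rw [h_sum]
  exact (h_all.add h_even).congr_fun fun m =>
    sum_range_half_add_one_sq_mul_cpow m (h_ne 1 hs1) (h_ne 2 hs2) (h_ne 3 hs3)

theorem second_moment_sum_hurwitzZeta_even (s : ℂ) (hs : 4 < s.re) :
    ∑' k : ℕ, ((k : ℂ) + 1) ^ 2 * hzeta s (2 * ((k : ℝ) + 1))
      = (1 / 24) * ((3 * 2 ^ (1 - s) - 1) * riemannZeta (s - 1)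
          + 6 * 2 ^ (1 - s) * riemannZeta (s - 2) + riemannZeta (s - 3)) := by
  calc ∑' k : ℕ, ((k : ℂ) + 1) ^ 2 * hzeta s (2 * ((k : ℝ) + 1))
      = ∑' (k : ℕ) (m : ℕ), evenTailTerm s k m :=
        tsum_congr fun k => ((hasSum_evenTailTerm (by linarith) k).tsum_eq).symm
    _ = ∑' (m : ℕ) (k : ℕ), evenTailTerm s k m := (summable_uncurry_evenTailTerm hs).tsum_comm.symm
    _ = ∑' m : ℕ, (∑ k ∈ range (m / 2), ((k : ℂ) + 1) ^ 2) * (m : ℂ) ^ (-s) :=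
        tsum_congr (tsum_evenTailTerm_left s)
    _ = _ := (hasSum_sum_range_half_add_one_sq_mul_cpow hs).tsum_eq
end

section
/- Transformation formula: for all real numbers a > 0 and b > 0 and every complex number s with Re(s) > 2, one has ∑_{k=0}^∞ ζ(s, ka+b) = a^{−s} ∑_{n=0}^∞ ζ(s, (n+b)/a). -/
open Complex

/-!
Both sides are iterated sums of `(k a + n + b)^(-s)` over `(k, n) ∈ ℕ × ℕ`, in the two possible
orders: on the right, `a^(-s) (k + (n + b)/a)^(-s) = (k a + n + b)^(-s)`. For `Re s > 2` the double
series converges absolutely, because `(u + v)^(-2t) ≤ u^(-t) v^(-t)` bounds it by the product of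
two one-dimensional series with exponent `Re s / 2 > 1`; so the order of summation can be swapped.
-/

lemma add_rpow_neg_two_mul_le_mul {u v t : ℝ} (hu : 0 < u) (hv : 0 < v) (ht : 0 ≤ t) :
    (u + v) ^ (-(2 * t)) ≤ u ^ (-t) * v ^ (-t) := by
  have huv : 0 < u + v := by positivity
  rw [two_mul, neg_add, Real.rpow_add huv]
  exact mul_le_mul (Real.rpow_le_rpow_of_nonpos hu (by linarith) (by linarith))
    (Real.rpow_le_rpow_of_nonpos hv (by linarith) (by linarith))
    (by positivity) (by positivity)

lemma summable_nat_mul_add_rpow_neg {c d t : ℝ} (hc : 0 < c) (hd : 0 < d) (ht : 1 < t) :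
    Summable fun n : ℕ => ((n : ℝ) * c + d) ^ (-t) := by
  refine (((Real.summable_one_div_nat_add_rpow (d / c) t).mpr ht).mul_left (c ^ (-t))).congr
    fun n => ?_
  have hpos : 0 < (n : ℝ) + d / c := by positivity
  rw [abs_of_pos hpos, one_div, ← Real.rpow_neg hpos.le, ← Real.mul_rpow hc.le hpos.le]
  congr 1
  field_simp

lemma summable_nat_mul_add_nat_add_rpow_neg {a b σ : ℝ} (ha : 0 < a) (hb : 0 < b) (hσ : 2 < σ) :
    Summable fun p : ℕ × ℕ => ((p.1 : ℝ) * a + ((p.2 : ℝ) + b)) ^ (-σ) := by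
  have ht : 1 < σ / 2 := by linarith
  have hprod := (summable_nat_mul_add_rpow_neg ha (half_pos hb) ht).mul_of_nonneg
    (summable_nat_mul_add_rpow_neg one_pos (half_pos hb) ht)
    (fun _ => by positivity) (fun _ => by positivity)
  refine hprod.of_nonneg_of_le (fun _ => by positivity) fun p => ?_
  have hsplit : (p.1 : ℝ) * a + ((p.2 : ℝ) + b)
      = ((p.1 : ℝ) * a + b / 2) + ((p.2 : ℝ) * 1 + b / 2) := by
    ring
  have hσ' : 2 * (σ / 2) = σ := by ring
  have key := add_rpow_neg_two_mul_le_mul (t := σ / 2)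
    (by positivity : 0 < (p.1 : ℝ) * a + b / 2) (by positivity : 0 < (p.2 : ℝ) * 1 + b / 2)
    (by linarith)
  rwa [hσ', ← hsplit] at key

lemma summable_ofReal_cpow_neg {ι : Type*} {f : ι → ℝ} (hf : ∀ i, 0 < f i) {s : ℂ}
    (h : Summable fun i => f i ^ (-s.re)) : Summable fun i => (f i : ℂ) ^ (-s) :=
  .of_norm <| h.congr fun i => by rw [norm_cpow_eq_rpow_re_of_pos (hf i), neg_re]

lemma hzeta_eq_tsum_ofReal (s : ℂ) (α : ℝ) :
    hzeta s α = ∑' n : ℕ, (((n : ℝ) + α : ℝ) : ℂ) ^ (-s) := by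
  simp only [hzeta, ofReal_add, ofReal_natCast]

lemma cpow_neg_mul_hzeta_div {a x : ℝ} (ha : 0 < a) (hx : 0 ≤ x) (s : ℂ) :
    (a : ℂ) ^ (-s) * hzeta s (x / a) = ∑' k : ℕ, (((k : ℝ) * a + x : ℝ) : ℂ) ^ (-s) := by
  rw [hzeta_eq_tsum_ofReal, ← tsum_mul_left]
  refine tsum_congr fun k => ?_
  rw [← mul_cpow_ofReal_nonneg ha.le (by positivity), ← ofReal_mul]
  congr 3
  field_simp

theorem sum_hurwitzZeta_transformation (a b : ℝ) (ha : 0 < a) (hb : 0 < b)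
    (s : ℂ) (hs : 2 < s.re) :
    ∑' k : ℕ, hzeta s ((k : ℝ) * a + b)
      = (a : ℂ) ^ (-s) * ∑' n : ℕ, hzeta s (((n : ℝ) + b) / a) := by
  have hsum : Summable fun p : ℕ × ℕ => (((p.1 : ℝ) * a + ((p.2 : ℝ) + b) : ℝ) : ℂ) ^ (-s) :=
    summable_ofReal_cpow_neg (fun _ => by positivity)
      (summable_nat_mul_add_nat_add_rpow_neg ha hb hs)
  have hright (n : ℕ) := cpow_neg_mul_hzeta_div ha (by positivity : (0 : ℝ) ≤ n + b) s
  rw [← tsum_mul_left]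
  simp_rw [hright, hzeta_eq_tsum_ofReal]
  refine .trans ?_
    (hsum.tsum_comm (f := fun k n : ℕ => (((k : ℝ) * a + ((n : ℝ) + b) : ℝ) : ℂ) ^ (-s))).symm
  refine tsum_congr fun k => tsum_congr fun n => ?_
  rw [add_left_comm]
end
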